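/- Suppose α, β ∈ R lie in the same orbit under W. Then: (i) for all σ, δ ∈ V⁰ with α+σ, α+δ ∈ R (hence also β+σ, β+δ ∈ R), [t̂_α^σ, t̂_α^δ] = [t̂_β^σ, t̂_β^δ]; (ii) for all σ, δ ∈ V⁰ with α+σ, α+δ, α+σ+δ ∈ R, t̂_{α+σ}^δ t̂_α^{−δ} = t̂_{β+σ}^δ t̂_β^{−δ}; (iii) for all δ₁, …, δ_n ∈ V⁰ with α+δ_r ∈ R for each r and α+(δ₁+⋯+δ_n) ∈ R, t̂_α^{−(δ₁+⋯+δ_n)} ∏_{r=1}^n t̂_α^{δ_r} = t̂_β^{−(δ₁+⋯+δ_n)} ∏_{r=1}^n t̂_β^{δ_r}, the products being taken in increasing order of r. -/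

import Mathlib

/-!
Sending `ŵ_α ↦ s_α` gives an action of `Ŵ` on `V`, and relation (II) makes conjugation by any
`g ∈ Ŵ` send `ŵ_γ` to `ŵ_{gγ}`. As `g` fixes `V⁰` pointwise, it sends `t̂_γ^σ` to `t̂_{gγ}^σ`, so
conjugating each of the three expressions for `α` by a `g` with `gα = β` yields the expression
for `β`. But each expression acts trivially on `V`: `t̂_γ^σ` acts as the transvection
`u ↦ u + (u, γ^∨) σ`, which depends on `γ` only modulo `V⁰` and is additive in `σ`. An element
acting trivially commutes with every generator, hence is central, and conjugation fixes it.
-/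

/-- The reflection `s_α(u) = u - (u, α^∨) α` associated to a vector `α`, where
`α^∨ = 2α/(α,α)` and `B` is the bilinear form. -/
noncomputable def reflMap {V : Type*} [AddCommGroup V] [Module ℝ V] (B : V →ₗ[ℝ] V →ₗ[ℝ] ℝ)
    (α : V) : V → V :=
  fun u => u - ((2 * B u α) / B α α) • α

/-- The defining relations of the presented group `Ŵ`: (I) `ŵ_α² = 1` and
(II) `ŵ_α ŵ_β ŵ_α = ŵ_{s_α(β)}` for `α, β ∈ R`. -/
def eawRels {V : Type*} [AddCommGroup V] [Module ℝ V] (B : V →ₗ[ℝ] V →ₗ[ℝ] ℝ)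
    (R : Set V) : Set (FreeGroup R) :=
  {r | ∃ α : R, r = FreeGroup.of α * FreeGroup.of α} ∪
  {r | ∃ α β γ : R, (γ : V) = reflMap B (α : V) (β : V) ∧
        r = FreeGroup.of α * FreeGroup.of β * FreeGroup.of α * (FreeGroup.of γ)⁻¹}

/-- The group `Ŵ` presented by generators `ŵ_α` (`α ∈ R`) and relations (I), (II). -/
abbrev EAW {V : Type*} [AddCommGroup V] [Module ℝ V] (B : V →ₗ[ℝ] V →ₗ[ℝ] ℝ)
    (R : Set V) :=
  PresentedGroup (eawRels B R)

/-- The generator `ŵ_α` of `Ŵ`. -/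
def wgen {V : Type*} [AddCommGroup V] [Module ℝ V] (B : V →ₗ[ℝ] V →ₗ[ℝ] ℝ)
    (R : Set V) (α : V) (hα : α ∈ R) : EAW B R :=
  PresentedGroup.of (⟨α, hα⟩ : R)

/-- The element `t̂_α^σ = ŵ_{α+σ} ŵ_α` of `Ŵ`. -/
def tgen {V : Type*} [AddCommGroup V] [Module ℝ V] (B : V →ₗ[ℝ] V →ₗ[ℝ] ℝ)
    (R : Set V) (α σ : V) (hα : α ∈ R) (hασ : α + σ ∈ R) : EAW B R :=
  wgen B R (α + σ) hασ * wgen B R α hα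

/-- `β` lies in the orbit of `α` under the Weyl group `W`, the group generated by the
reflections `s_γ`, `γ ∈ R` (expressed via a finite sequence of reflections applied to `α`;
this is equivalent since each reflection is an involution). -/
def WOrbit {V : Type*} [AddCommGroup V] [Module ℝ V] (B : V →ₗ[ℝ] V →ₗ[ℝ] ℝ)
    (R : Set V) (α β : V) : Prop :=
  ∃ l : List R, β = l.foldr (fun γ u => reflMap B (γ : V) u) α

section Reflection

variable {V : Type*} [AddCommGroup V] [Module ℝ V] (B : V →ₗ[ℝ] V →ₗ[ℝ] ℝ)

lemma reflMap_of_isotropic {a : V} (ha : B a a = 0) : reflMap B a = id := by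
  funext u
  simp [reflMap, ha]

lemma reflMap_self {a : V} (ha : B a a ≠ 0) : reflMap B a a = -a := by
  simp only [reflMap]
  rw [mul_div_assoc, div_self ha]
  module

lemma reflMap_involutive (a : V) : Function.Involutive (reflMap B a) := by
  intro u
  by_cases ha : B a a = 0
  · simp [reflMap_of_isotropic B ha]
  · simp only [reflMap, map_sub, map_smul, LinearMap.sub_apply, LinearMap.smul_apply,
      smul_eq_mul]
    match_scalars <;> field_simp; ring

lemma apply_reflMap_reflMap (hsym : ∀ u v : V, B u v = B v u) (a b : V) :
    B (reflMap B a b) (reflMap B a b) = B b b := by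
  by_cases ha : B a a = 0
  · simp [reflMap_of_isotropic B ha]
  · simp only [reflMap, map_sub, map_smul, LinearMap.sub_apply, LinearMap.smul_apply,
      smul_eq_mul, hsym a b]
    field_simp
    ring

lemma reflMap_conj (hsym : ∀ u v : V, B u v = B v u) (a b : V) :
    reflMap B a ∘ reflMap B b ∘ reflMap B a = reflMap B (reflMap B a b) := by
  by_cases ha : B a a = 0
  · simp [reflMap_of_isotropic B ha]
  by_cases hb : B b b = 0
  · have hab : B (reflMap B a b) (reflMap B a b) = 0 := by
      rw [apply_reflMap_reflMap B hsym, hb]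
    rw [reflMap_of_isotropic B hb, reflMap_of_isotropic B hab, Function.id_comp]
    exact funext (reflMap_involutive B a)
  funext u
  simp only [Function.comp_apply]
  conv_rhs => rw [reflMap, apply_reflMap_reflMap B hsym]
  simp only [reflMap, map_sub, map_smul, LinearMap.sub_apply, LinearMap.smul_apply,
    smul_eq_mul, hsym a b]
  match_scalars <;> field_simp
  ring

lemma reflMap_add_of_orthogonal {a σ : V} (hσ : B σ a = 0) (u : V) :
    reflMap B a (u + σ) = reflMap B a u + σ := by
  simp only [reflMap, map_add, LinearMap.add_apply, hσ, add_zero]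
  abel

/-- `s_y (s_{y+σ} (y + σ)) = y - σ`. -/
lemma add_neg_mem_of_add_mem {R : Set V} (hnon : ∀ α ∈ R, B α α ≠ 0)
    (hclos : ∀ α ∈ R, ∀ β ∈ R, reflMap B α β ∈ R) {y σ : V} (hy : y ∈ R) (hyσ : y + σ ∈ R)
    (hσ : B σ y = 0) : y + -σ ∈ R := by
  have hneg : -(y + σ) ∈ R := reflMap_self B (hnon _ hyσ) ▸ hclos _ hyσ _ hyσ
  convert hclos _ hy _ hneg using 1
  simp only [reflMap, map_neg, map_add, LinearMap.neg_apply, LinearMap.add_apply, hσ]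
  rw [show 2 * -(B y y + 0) / B y y = -2 by field_simp [hnon _ hy]; ring]
  module

noncomputable def transvection (y σ : V) (u : V) : V :=
  u + (2 * B u y / B y y) • σ

lemma reflMap_add_comp_reflMap (hsym : ∀ u v : V, B u v = B v u) {y σ : V} (hy : B y y ≠ 0)
    (hσ : σ ∈ LinearMap.ker B) : reflMap B (y + σ) ∘ reflMap B y = transvection B y σ := by
  have hσ : ∀ u, B σ u = 0 := LinearMap.congr_fun hσ
  have hσ' : ∀ u, B u σ = 0 := fun u => hsym u σ ▸ hσ u
  funext u
  simp only [Function.comp_apply, reflMap, transvection, map_sub, map_add, map_smul,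
    LinearMap.sub_apply, LinearMap.add_apply, LinearMap.smul_apply, smul_eq_mul, hσ, hσ']
  match_scalars <;> field_simp [hy] <;> ring

lemma transvection_zero (y : V) : transvection B y 0 = id := by
  funext u
  simp [transvection]

lemma transvection_comp {y σ δ : V} (hδ : B δ y = 0) :
    transvection B y σ ∘ transvection B y δ = transvection B y (σ + δ) := by
  funext u
  simp only [Function.comp_apply, transvection, map_add, map_smul, LinearMap.add_apply,
    LinearMap.smul_apply, smul_eq_mul, hδ]
  module

lemma transvection_add_left (hsym : ∀ u v : V, B u v = B v u) {τ : V}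
    (hτ : τ ∈ LinearMap.ker B) (y σ : V) : transvection B (y + τ) σ = transvection B y σ := by
  have hτ : ∀ u, B τ u = 0 := LinearMap.congr_fun hτ
  have hτ' : ∀ u, B u τ = 0 := fun u => hsym u τ ▸ hτ u
  funext u
  simp [transvection, hτ, hτ']

end Reflection

section Presentation

variable {V : Type*} [AddCommGroup V] [Module ℝ V] (B : V →ₗ[ℝ] V →ₗ[ℝ] ℝ) (R : Set V)

lemma wgen_congr {x y : V} (h : x = y) (hx : x ∈ R) (hy : y ∈ R) :
    wgen B R x hx = wgen B R y hy := by
  subst h; rfl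

lemma wgen_mul_self {x : V} (hx : x ∈ R) : wgen B R x hx * wgen B R x hx = 1 :=
  PresentedGroup.one_of_mem (Or.inl ⟨⟨x, hx⟩, rfl⟩)

lemma wgen_inv {x : V} (hx : x ∈ R) : (wgen B R x hx)⁻¹ = wgen B R x hx :=
  inv_eq_of_mul_eq_one_right (wgen_mul_self B R hx)

lemma wgen_mul_wgen_mul_wgen (hclos : ∀ α ∈ R, ∀ β ∈ R, reflMap B α β ∈ R)
    {x y : V} (hx : x ∈ R) (hy : y ∈ R) :
    wgen B R x hx * wgen B R y hy * wgen B R x hx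
      = wgen B R (reflMap B x y) (hclos _ hx _ hy) :=
  mul_inv_eq_one.mp <| PresentedGroup.one_of_mem
    (Or.inr ⟨⟨x, hx⟩, ⟨y, hy⟩, ⟨reflMap B x y, hclos _ hx _ hy⟩, rfl, rfl⟩)

/-- The generators are involutions, so no inverse case is needed. -/
@[elab_as_elim]
lemma wgen_mul_induction {C : EAW B R → Prop} (one : C 1)
    (wgen_mul : ∀ x (hx : x ∈ R) g, C g → C (wgen B R x hx * g)) (g : EAW B R) : C g := by
  have hg : g ∈ Subgroup.closure (Set.range (PresentedGroup.of : R → EAW B R)) := by simp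
  induction hg using Subgroup.closure_induction_left with
  | one => exact one
  | mul_left _ hx _ _ ih =>
    obtain ⟨x, rfl⟩ := hx
    exact wgen_mul x x.2 _ ih
  | inv_mul_cancel _ hx _ _ ih =>
    obtain ⟨x, rfl⟩ := hx
    exact (wgen_inv B R x.2).symm ▸ wgen_mul x x.2 _ ih

noncomputable def weylRep (hsym : ∀ u v : V, B u v = B v u) : EAW B R →* Equiv.Perm V :=
  PresentedGroup.toGroup (f := fun x : R => (reflMap_involutive B x).toPerm) <| by
    rintro r (⟨a, rfl⟩ | ⟨a, b, c, hc, rfl⟩)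
    · ext u
      exact reflMap_involutive B a u
    · simp only [map_mul, map_inv, FreeGroup.lift_apply_of, mul_inv_eq_one]
      ext u
      exact hc ▸ congrFun (reflMap_conj B hsym a b) u

variable (hsym : ∀ u v : V, B u v = B v u)

@[simp]
lemma coe_weylRep_wgen {x : V} (hx : x ∈ R) : ⇑(weylRep B R hsym (wgen B R x hx)) = reflMap B x :=
  congrArg DFunLike.coe (PresentedGroup.toGroup.of _)

lemma weylRep_mem (hclos : ∀ α ∈ R, ∀ β ∈ R, reflMap B α β ∈ R) (g : EAW B R) {y : V}
    (hy : y ∈ R) : weylRep B R hsym g y ∈ R := by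
  induction g using wgen_mul_induction with
  | one => exact hy
  | wgen_mul x hx g ih => simpa using hclos x hx _ ih

lemma weylRep_add_of_mem_ker {σ : V} (hσ : σ ∈ LinearMap.ker B) (g : EAW B R) (y : V) :
    weylRep B R hsym g (y + σ) = weylRep B R hsym g y + σ := by
  induction g using wgen_mul_induction with
  | one => rfl
  | wgen_mul x hx g ih => simp [ih, reflMap_add_of_orthogonal B (LinearMap.congr_fun hσ x)]

lemma weylRep_add_mem (hclos : ∀ α ∈ R, ∀ β ∈ R, reflMap B α β ∈ R) {σ : V}
    (hσ : σ ∈ LinearMap.ker B) (g : EAW B R) {y : V} (hyσ : y + σ ∈ R) :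
    weylRep B R hsym g y + σ ∈ R :=
  weylRep_add_of_mem_ker B R hsym hσ g y ▸ weylRep_mem B R hsym hclos g hyσ

lemma conj_wgen (hclos : ∀ α ∈ R, ∀ β ∈ R, reflMap B α β ∈ R) (g : EAW B R) {y : V}
    (hy : y ∈ R) :
    MulAut.conj g (wgen B R y hy)
      = wgen B R (weylRep B R hsym g y) (weylRep_mem B R hsym hclos g hy) := by
  induction g using wgen_mul_induction with
  | one => simp
  | wgen_mul x hx g ih =>
    rw [map_mul, MulAut.mul_apply, ih, MulAut.conj_apply, wgen_inv,
      wgen_mul_wgen_mul_wgen B R hclos]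
    simp

lemma mem_center_of_weylRep_eq_one (hclos : ∀ α ∈ R, ∀ β ∈ R, reflMap B α β ∈ R)
    {k : EAW B R} (hk : weylRep B R hsym k = 1) : k ∈ Subgroup.center (EAW B R) := by
  refine Subgroup.mem_center_iff.2 fun g => ?_
  change Commute g k
  induction g using wgen_mul_induction with
  | one => exact Commute.one_left k
  | wgen_mul x hx g ih =>
    have hx_fixed := conj_wgen B R hsym hclos k hx
    simp only [hk, MulAut.conj_apply, Equiv.Perm.one_apply] at hx_fixed
    exact Commute.mul_left (mul_inv_eq_iff_eq_mul.1 hx_fixed).symm ih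

lemma conj_tgen (hclos : ∀ α ∈ R, ∀ β ∈ R, reflMap B α β ∈ R) (g : EAW B R) {y σ : V}
    (hσ : σ ∈ LinearMap.ker B) (hy : y ∈ R) (hyσ : y + σ ∈ R) :
    MulAut.conj g (tgen B R y σ hy hyσ)
      = tgen B R (weylRep B R hsym g y) σ (weylRep_mem B R hsym hclos g hy)
          (weylRep_add_mem B R hsym hclos hσ g hyσ) := by
  rw [tgen, map_mul, conj_wgen B R hsym hclos, conj_wgen B R hsym hclos, tgen]
  exact congrArg (· * _) (wgen_congr B R (weylRep_add_of_mem_ker B R hsym hσ g y) _ _)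

lemma coe_weylRep_tgen (hnon : ∀ α ∈ R, B α α ≠ 0) {y σ : V} (hσ : σ ∈ LinearMap.ker B)
    (hy : y ∈ R) (hyσ : y + σ ∈ R) :
    ⇑(weylRep B R hsym (tgen B R y σ hy hyσ)) = transvection B y σ := by
  rw [tgen, map_mul, Equiv.Perm.coe_mul, coe_weylRep_wgen, coe_weylRep_wgen]
  exact reflMap_add_comp_reflMap B hsym (hnon y hy) hσ

end Presentation

section Invariants

variable {V : Type*} [AddCommGroup V] [Module ℝ V] (B : V →ₗ[ℝ] V →ₗ[ℝ] ℝ) (R : Set V)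
  (hsym : ∀ u v : V, B u v = B v u)

lemma weylRep_tgen_commutator (hnon : ∀ α ∈ R, B α α ≠ 0) {y σ δ : V}
    (hσ : σ ∈ LinearMap.ker B) (hδ : δ ∈ LinearMap.ker B)
    (hy : y ∈ R) (hyσ : y + σ ∈ R) (hyδ : y + δ ∈ R) :
    weylRep B R hsym ((tgen B R y σ hy hyσ)⁻¹ * (tgen B R y δ hy hyδ)⁻¹ *
      tgen B R y σ hy hyσ * tgen B R y δ hy hyδ) = 1 := by
  have hcomm : Commute (weylRep B R hsym (tgen B R y σ hy hyσ))
      (weylRep B R hsym (tgen B R y δ hy hyδ)) := by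
    refine DFunLike.coe_injective ?_
    rw [Equiv.Perm.coe_mul, Equiv.Perm.coe_mul, coe_weylRep_tgen B R hsym hnon hσ,
      coe_weylRep_tgen B R hsym hnon hδ, transvection_comp B (LinearMap.congr_fun hσ y),
      transvection_comp B (LinearMap.congr_fun hδ y), add_comm]
  simp only [map_mul, map_inv]
  rw [mul_assoc, hcomm.eq]
  group

lemma weylRep_tgen_add_mul_tgen_neg (hnon : ∀ α ∈ R, B α α ≠ 0) {y σ δ : V}
    (hσ : σ ∈ LinearMap.ker B) (hδ : δ ∈ LinearMap.ker B)
    (hy : y ∈ R) (hyσ : y + σ ∈ R) (hyσδ : y + σ + δ ∈ R) (hynδ : y + -δ ∈ R) :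
    weylRep B R hsym (tgen B R (y + σ) δ hyσ hyσδ * tgen B R y (-δ) hy hynδ) = 1 := by
  have hnδ : -δ ∈ LinearMap.ker B := neg_mem hδ
  refine DFunLike.coe_injective ?_
  rw [map_mul, Equiv.Perm.coe_mul, coe_weylRep_tgen B R hsym hnon hδ,
    coe_weylRep_tgen B R hsym hnon hnδ, transvection_add_left B hsym hσ,
    transvection_comp B (LinearMap.congr_fun hnδ y), add_neg_cancel, transvection_zero]
  rfl

lemma coe_weylRep_prod_tgen (hnon : ∀ α ∈ R, B α α ≠ 0) {y : V} (hy : y ∈ R) {n : ℕ}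
    (δs : Fin n → V) (hδs : ∀ r, δs r ∈ LinearMap.ker B) (hyδs : ∀ r, y + δs r ∈ R) :
    ⇑(weylRep B R hsym (List.ofFn fun r => tgen B R y (δs r) hy (hyδs r)).prod)
      = transvection B y (∑ r, δs r) := by
  induction n with
  | zero => simp [transvection_zero]
  | succ n ih =>
    have hsum : ∑ r : Fin n, δs r.succ ∈ LinearMap.ker B :=
      Submodule.sum_mem _ fun r _ => hδs r.succ
    rw [List.ofFn_succ, List.prod_cons, map_mul, Equiv.Perm.coe_mul,
      ih (fun r => δs r.succ) (fun r => hδs r.succ) (fun r => hyδs r.succ),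
      coe_weylRep_tgen B R hsym hnon (hδs 0), transvection_comp B (LinearMap.congr_fun hsum y),
      Fin.sum_univ_succ]

lemma weylRep_tgen_neg_sum_mul_prod_tgen (hnon : ∀ α ∈ R, B α α ≠ 0) {y : V} (hy : y ∈ R)
    {n : ℕ} (δs : Fin n → V) (hδs : ∀ r, δs r ∈ LinearMap.ker B) (hyδs : ∀ r, y + δs r ∈ R)
    (hyn : y + -(∑ r, δs r) ∈ R) :
    weylRep B R hsym (tgen B R y (-(∑ r, δs r)) hy hyn *
      (List.ofFn fun r => tgen B R y (δs r) hy (hyδs r)).prod) = 1 := by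
  have hsum : ∑ r, δs r ∈ LinearMap.ker B := Submodule.sum_mem _ fun r _ => hδs r
  refine DFunLike.coe_injective ?_
  rw [map_mul, Equiv.Perm.coe_mul, coe_weylRep_prod_tgen B R hsym hnon hy δs hδs hyδs,
    coe_weylRep_tgen B R hsym hnon (neg_mem hsum),
    transvection_comp B (LinearMap.congr_fun hsum y), neg_add_cancel, transvection_zero]
  rfl

lemma eq_conj_of_weylRep_eq_one (hclos : ∀ α ∈ R, ∀ β ∈ R, reflMap B α β ∈ R) {k : EAW B R}
    (hk : weylRep B R hsym k = 1) (g : EAW B R) : k = MulAut.conj g k := by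
  rw [MulAut.conj_apply, Subgroup.mem_center_iff.1 (mem_center_of_weylRep_eq_one B R hsym hclos hk),
    mul_inv_cancel_right]

lemma WOrbit.exists_weylRep_eq {α β : V} (h : WOrbit B R α β) :
    ∃ g : EAW B R, weylRep B R hsym g α = β := by
  obtain ⟨l, rfl⟩ := h
  induction l with
  | nil => exact ⟨1, rfl⟩
  | cons γ l ih =>
    obtain ⟨g, hg⟩ := ih
    exact ⟨wgen B R γ γ.2 * g, by simp [hg]⟩

end Invariants

theorem orbit_invariance_general {V : Type*} [AddCommGroup V] [Module ℝ V]
    (B : V →ₗ[ℝ] V →ₗ[ℝ] ℝ) (R : Set V)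
    (hsym : ∀ u v : V, B u v = B v u)
    (hnon : ∀ α ∈ R, B α α ≠ 0)
    (hclos : ∀ α ∈ R, ∀ β ∈ R, reflMap B α β ∈ R)
    (α β : V) (hα : α ∈ R) (hβ : β ∈ R) (horb : WOrbit B R α β) :
    -- (i)
    (∀ (σ δ : V), (∀ u : V, B σ u = 0) → (∀ u : V, B δ u = 0) →
        ∀ (hασ : α + σ ∈ R) (hαδ : α + δ ∈ R),
          ∃ (hβσ : β + σ ∈ R) (hβδ : β + δ ∈ R),
            (tgen B R α σ hα hασ)⁻¹ * (tgen B R α δ hα hαδ)⁻¹ *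
                tgen B R α σ hα hασ * tgen B R α δ hα hαδ =
              (tgen B R β σ hβ hβσ)⁻¹ * (tgen B R β δ hβ hβδ)⁻¹ *
                tgen B R β σ hβ hβσ * tgen B R β δ hβ hβδ) ∧
    -- (ii)
    (∀ (σ δ : V), (∀ u : V, B σ u = 0) → (∀ u : V, B δ u = 0) →
        ∀ (hασ : α + σ ∈ R) (hαδ : α + δ ∈ R) (hασδ : α + σ + δ ∈ R),
          ∃ (hαnd : α + -δ ∈ R) (hβσ : β + σ ∈ R) (hβσδ : β + σ + δ ∈ R)
            (hβnd : β + -δ ∈ R),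
            tgen B R (α + σ) δ hασ hασδ * tgen B R α (-δ) hα hαnd =
              tgen B R (β + σ) δ hβσ hβσδ * tgen B R β (-δ) hβ hβnd) ∧
    -- (iii)
    (∀ (n : ℕ) (δs : Fin n → V), (∀ r : Fin n, ∀ u : V, B (δs r) u = 0) →
        ∀ (hmα : ∀ r : Fin n, α + δs r ∈ R), (α + ∑ r : Fin n, δs r ∈ R) →
          ∃ (hnα : α + -(∑ r : Fin n, δs r) ∈ R) (hmβ : ∀ r : Fin n, β + δs r ∈ R)
            (hnβ : β + -(∑ r : Fin n, δs r) ∈ R),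
            tgen B R α (-(∑ r : Fin n, δs r)) hα hnα *
                (List.ofFn fun r : Fin n => tgen B R α (δs r) hα (hmα r)).prod =
              tgen B R β (-(∑ r : Fin n, δs r)) hβ hnβ *
                (List.ofFn fun r : Fin n => tgen B R β (δs r) hβ (hmβ r)).prod) := by
  obtain ⟨g, rfl⟩ := horb.exists_weylRep_eq B R hsym
  have invariant := fun k hk => eq_conj_of_weylRep_eq_one B R hsym hclos (k := k) hk g
  refine ⟨fun σ δ hσ hδ hασ hαδ => ?_, fun σ δ hσ hδ hασ hαδ hασδ => ?_,
    fun n δs hδs hαδs hαsum => ?_⟩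
  · replace hσ : σ ∈ LinearMap.ker B := LinearMap.ext hσ
    replace hδ : δ ∈ LinearMap.ker B := LinearMap.ext hδ
    refine ⟨weylRep_add_mem B R hsym hclos hσ g hασ, weylRep_add_mem B R hsym hclos hδ g hαδ, ?_⟩
    rw [invariant _ (weylRep_tgen_commutator B R hsym hnon hσ hδ hα hασ hαδ)]
    simp only [map_mul, map_inv, conj_tgen B R hsym hclos g hσ, conj_tgen B R hsym hclos g hδ]
  · replace hσ : σ ∈ LinearMap.ker B := LinearMap.ext hσ
    replace hδ : δ ∈ LinearMap.ker B := LinearMap.ext hδ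
    have hαnδ := add_neg_mem_of_add_mem B hnon hclos hα hαδ (LinearMap.congr_fun hδ α)
    refine ⟨hαnδ, weylRep_add_mem B R hsym hclos hσ g hασ, ?_,
      weylRep_add_mem B R hsym hclos (neg_mem hδ) g hαnδ, ?_⟩
    · simpa only [weylRep_add_of_mem_ker B R hsym hσ] using
        weylRep_add_mem B R hsym hclos hδ g hασδ
    rw [invariant _ (weylRep_tgen_add_mul_tgen_neg B R hsym hnon hσ hδ hα hασ hασδ hαnδ)]
    simp only [map_mul, conj_tgen B R hsym hclos g hδ, conj_tgen B R hsym hclos g (neg_mem hδ),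
      weylRep_add_of_mem_ker B R hsym hσ]
  · replace hδs : ∀ r, δs r ∈ LinearMap.ker B := fun r => LinearMap.ext (hδs r)
    have hsum : ∑ r, δs r ∈ LinearMap.ker B := Submodule.sum_mem _ fun r _ => hδs r
    have hαn := add_neg_mem_of_add_mem B hnon hclos hα hαsum (LinearMap.congr_fun hsum α)
    refine ⟨hαn, fun r => weylRep_add_mem B R hsym hclos (hδs r) g (hαδs r),
      weylRep_add_mem B R hsym hclos (neg_mem hsum) g hαn, ?_⟩
    rw [invariant _ (weylRep_tgen_neg_sum_mul_prod_tgen B R hsym hnon hα δs hδs hαδs hαn)]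
    simp only [map_mul, map_list_prod, List.map_ofFn, Function.comp_def,
      conj_tgen B R hsym hclos g (neg_mem hsum), conj_tgen B R hsym hclos g (hδs _)]

/-- If `α, β ∈ R` lie in the same `W`-orbit, then:
(i) `[t̂_α^σ, t̂_α^δ] = [t̂_β^σ, t̂_β^δ]` (with `[x,y] = x⁻¹y⁻¹xy`);
(ii) `t̂_{α+σ}^δ t̂_α^{−δ} = t̂_{β+σ}^δ t̂_β^{−δ}`;
(iii) `t̂_α^{−(δ₁+⋯+δ_n)} ∏ t̂_α^{δ_r} = t̂_β^{−(δ₁+⋯+δ_n)} ∏ t̂_β^{δ_r}`. -/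
theorem orbit_invariance {V : Type*} [AddCommGroup V] [Module ℝ V]
    (B : V →ₗ[ℝ] V →ₗ[ℝ] ℝ) (R : Set V)
    (hsym : ∀ u v : V, B u v = B v u)
    (hpsd : ∀ v : V, 0 ≤ B v v)
    (hnon : ∀ α ∈ R, B α α ≠ 0)
    (hclos : ∀ α ∈ R, ∀ β ∈ R, reflMap B α β ∈ R)
    (α β : V) (hα : α ∈ R) (hβ : β ∈ R) (horb : WOrbit B R α β) :
    -- (i)
    (∀ (σ δ : V), (∀ u : V, B σ u = 0) → (∀ u : V, B δ u = 0) →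
        ∀ (hασ : α + σ ∈ R) (hαδ : α + δ ∈ R),
          ∃ (hβσ : β + σ ∈ R) (hβδ : β + δ ∈ R),
            (tgen B R α σ hα hασ)⁻¹ * (tgen B R α δ hα hαδ)⁻¹ *
                tgen B R α σ hα hασ * tgen B R α δ hα hαδ =
              (tgen B R β σ hβ hβσ)⁻¹ * (tgen B R β δ hβ hβδ)⁻¹ *
                tgen B R β σ hβ hβσ * tgen B R β δ hβ hβδ) ∧
    -- (ii)
    (∀ (σ δ : V), (∀ u : V, B σ u = 0) → (∀ u : V, B δ u = 0) →
        ∀ (hασ : α + σ ∈ R) (hαδ : α + δ ∈ R) (hασδ : α + σ + δ ∈ R),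
          ∃ (hαnd : α + -δ ∈ R) (hβσ : β + σ ∈ R) (hβσδ : β + σ + δ ∈ R)
            (hβnd : β + -δ ∈ R),
            tgen B R (α + σ) δ hασ hασδ * tgen B R α (-δ) hα hαnd =
              tgen B R (β + σ) δ hβσ hβσδ * tgen B R β (-δ) hβ hβnd) ∧
    -- (iii)
    (∀ (n : ℕ) (δs : Fin n → V), (∀ r : Fin n, ∀ u : V, B (δs r) u = 0) →
        ∀ (hmα : ∀ r : Fin n, α + δs r ∈ R), (α + ∑ r : Fin n, δs r ∈ R) →
          ∃ (hnα : α + -(∑ r : Fin n, δs r) ∈ R) (hmβ : ∀ r : Fin n, β + δs r ∈ R)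
            (hnβ : β + -(∑ r : Fin n, δs r) ∈ R),
            tgen B R α (-(∑ r : Fin n, δs r)) hα hnα *
                (List.ofFn fun r : Fin n => tgen B R α (δs r) hα (hmα r)).prod =
              tgen B R β (-(∑ r : Fin n, δs r)) hβ hnβ *
                (List.ofFn fun r : Fin n => tgen B R β (δs r) hβ (hmβ r)).prod) :=
  orbit_invariance_general B R hsym hnon hclos α β hα hβ horb
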